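/- arXiv:2503.21648 — 2 statements merged into one kernel-verified Lean document; each statement's English description precedes it below -/
import Mathlib

section
/- Let I ⊆ ℝ be an open interval and let Q_n = {(α_1,…,α_n) ∈ I^n : α_i = α_j if and only if i = j} be the set of n-tuples with pairwise distinct coordinates. Then the convex hull of Q_n in ℝ^n equals I^n. -/
/-- The convex hull of the set of tuples in `I^n` with pairwise distinct coordinates,
where `I ⊆ ℝ` is an open interval, equals `I^n`. -/
theorem stmt0 (n : ℕ) (I : Set ℝ) (hI : IsOpen I) (hI' : I.OrdConnected) :
    convexHull ℝ {f : Fin n → ℝ | (∀ i, f i ∈ I) ∧ ∀ i j, f i = f j ↔ i = j} =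
      {f : Fin n → ℝ | ∀ i, f i ∈ I} := by
  set Q : Set (Fin n → ℝ) :=
    {f : Fin n → ℝ | (∀ i, f i ∈ I) ∧ ∀ i j, f i = f j ↔ i = j} with hQ
  have hIconv : Convex ℝ I := by
    rw [convex_iff_ordConnected]; exact hI'
  apply le_antisymm
  · apply convexHull_min
    · intro f hf
      exact hf.1
    · have : {f : Fin n → ℝ | ∀ i, f i ∈ I} = Set.pi Set.univ (fun _ => I) := by
        ext f; simp [Set.mem_pi]
      rw [this]
      exact convex_pi fun i _ => hIconv
  · intro f hf
    rcases Nat.eq_zero_or_pos n with hn | hn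
    · subst hn
      exact subset_convexHull ℝ Q ⟨fun i => i.elim0, fun i => i.elim0⟩
    haveI : Nonempty (Fin n) := Fin.pos_iff_nonempty.mp hn
    -- radius of balls inside I
    have hball : ∀ i, ∃ e > 0, Metric.ball (f i) e ⊆ I := fun i =>
      Metric.isOpen_iff.mp hI _ (hf i)
    choose e he hsub using hball
    set ε : ℝ := Finset.univ.inf' Finset.univ_nonempty e with hε
    have hεpos : 0 < ε := by
      rw [hε, Finset.lt_inf'_iff]
      exact fun i _ => he i
    have hεle : ∀ i, ε ≤ e i := fun i => Finset.inf'_le _ (Finset.mem_univ i)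
    set δ : ℝ := ε / n with hδ
    have hδpos : 0 < δ := div_pos hεpos (by exact_mod_cast hn)
    -- bad values of t
    set bad : Set ℝ := ⋃ i : Fin n, ⋃ j : Fin n,
      {(f j - f i) / ((i : ℝ) - (j : ℝ)), (f i - f j) / ((i : ℝ) - (j : ℝ))} with hbad
    have hbadfin : bad.Finite :=
      Set.finite_iUnion fun i => Set.finite_iUnion fun j => (Set.finite_singleton _).insert _
    have hne : ((Set.Ioo 0 δ) \ bad).Nonempty :=
      ((Set.Ioo_infinite hδpos).diff hbadfin).nonempty
    obtain ⟨t, ⟨⟨ht0, htδ⟩, htbad⟩⟩ := hne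
    have hcast : ∀ i j : Fin n, i ≠ j → (i : ℝ) ≠ (j : ℝ) := by
      intro i j hij h
      exact hij (Fin.ext (by exact_mod_cast h))
    -- the two perturbed points
    set g : Fin n → ℝ := fun i => f i + t * (i : ℝ) with hg
    set h : Fin n → ℝ := fun i => f i - t * (i : ℝ) with hh
    have hmem : ∀ i : Fin n, t * (i : ℝ) < ε := by
      intro i
      have hi : (i : ℝ) < n := by exact_mod_cast i.isLt
      have hi0 : (0 : ℝ) ≤ (i : ℝ) := by positivity
      have hn0 : (0 : ℝ) < n := by exact_mod_cast hn
      have : t * (n : ℝ) < ε := by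
        rw [hδ] at htδ
        calc t * (n : ℝ) < (ε / n) * n := by
              exact mul_lt_mul_of_pos_right htδ hn0
          _ = ε := by field_simp
      nlinarith
    have hgI : ∀ i, g i ∈ I := by
      intro i
      apply hsub i
      have : |g i - f i| < e i := by
        have : g i - f i = t * (i : ℝ) := by simp [hg]
        rw [this, abs_of_nonneg (by positivity)]
        exact lt_of_lt_of_le (hmem i) (hεle i)
      simpa [Metric.mem_ball, Real.dist_eq] using this
    have hhI : ∀ i, h i ∈ I := by
      intro i
      apply hsub i
      have : |h i - f i| < e i := by
        have : h i - f i = -(t * (i : ℝ)) := by simp [hh]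
        rw [this, abs_neg, abs_of_nonneg (by positivity)]
        exact lt_of_lt_of_le (hmem i) (hεle i)
      simpa [Metric.mem_ball, Real.dist_eq] using this
    have hgQ : g ∈ Q := by
      refine ⟨hgI, fun i j => ⟨fun hij => ?_, fun hij => by rw [hij]⟩⟩
      by_contra hne'
      apply htbad
      rw [hbad]
      refine Set.mem_iUnion.mpr ⟨i, Set.mem_iUnion.mpr ⟨j, ?_⟩⟩
      have hc := hcast i j hne'
      have : t = (f j - f i) / ((i : ℝ) - (j : ℝ)) := by
        field_simp [sub_ne_zero.mpr hc]
        simp only [hg] at hij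
        linarith [hij]
      simp [this]
    have hhQ : h ∈ Q := by
      refine ⟨hhI, fun i j => ⟨fun hij => ?_, fun hij => by rw [hij]⟩⟩
      by_contra hne'
      apply htbad
      rw [hbad]
      refine Set.mem_iUnion.mpr ⟨i, Set.mem_iUnion.mpr ⟨j, ?_⟩⟩
      have hc := hcast i j hne'
      have : t = (f i - f j) / ((i : ℝ) - (j : ℝ)) := by
        field_simp [sub_ne_zero.mpr hc]
        simp only [hh] at hij
        linarith [hij]
      simp [this]
    have hgh : f = (1/2 : ℝ) • g + (1/2 : ℝ) • h := by
      funext i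
      simp [hg, hh]
      ring
    rw [hgh]
    exact (convex_convexHull ℝ Q) (subset_convexHull ℝ Q hgQ)
      (subset_convexHull ℝ Q hhQ) (by norm_num) (by norm_num) (by norm_num)
end

section
/- Let G be a group acting on the right on a set V, let A be an abelian group acting freely on V with the action of A and G combining to an action of a semidirect product A ⋊ G on V, let p : V → X be the quotient by A (so G acts on X), and let Ψ : V × A → F be a map into an abelian group F such that: (Ψ1) Ψ(v,a) depends only on (p(v),a); (Ψ2) Ψ(v·g, g^{-1}ag) = Ψ(v,a) for all g ∈ G; (Ψ3) for each v, the map a ↦ Ψ(v,a) is a group homomorphism A → F. Fix x ∈ X and for w ∈ p^{-1}(x) and g ∈ G_x (the stabilizer of x) let z_w(g) ∈ A be the unique element with w·z_w(g) = w·g, and set Ψ_w(g) := Ψ(w, z_w(g)). Then Ψ_w is independent of the choice of w ∈ p^{-1}(x), and Ψ_w : G_x → F is a group homomorphism. -/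
/-- Abstract form of Lemma on affine `Ψ`-bundles: let a semidirect product `A ⋊[φ] G`
act (on the right, encoded by `act`) on `V`, with `A` abelian acting freely and
transitively on the fibers of `p : V → X`, `G` acting on `X` compatibly via `xact`,
and `Ψ : V × A → F` satisfying (Ψ1) `Ψ(v,a)` depends only on `(p v, a)`,
(Ψ2) `Ψ(v·g, g⁻¹ag) = Ψ(v,a)`, (Ψ3) `Ψ(v,·)` is a homomorphism.
Then for `x ∈ X`, the map `Ψ_w : G_x → F`, `Ψ_w(g) := Ψ(w, z_w(g))` where
`w·z_w(g) = w·g`, is independent of the choice of `w ∈ p⁻¹(x)` and is a group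
homomorphism on the stabilizer `G_x`. -/
theorem stmt3 {A G V X F : Type*} [CommGroup A] [Group G] [CommGroup F]
    (φ : G →* MulAut A)
    (act : V → A ⋊[φ] G → V)
    (hact_one : ∀ v, act v 1 = v)
    (hact_mul : ∀ v m n, act (act v m) n = act v (m * n))
    (p : V → X)
    (xact : X → G → X)
    (hpG : ∀ (v : V) (g : G), p (act v (SemidirectProduct.inr g)) = xact (p v) g)
    (hpA : ∀ (v : V) (a : A), p (act v (SemidirectProduct.inl a)) = p v)
    (hfree : ∀ (v : V) (a : A), act v (SemidirectProduct.inl a) = v → a = 1)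
    (htrans : ∀ v w : V, p v = p w → ∃ a : A, act v (SemidirectProduct.inl a) = w)
    (Ψ : V → A → F)
    (hΨ1 : ∀ v w : V, p v = p w → ∀ a : A, Ψ v a = Ψ w a)
    (hΨ2 : ∀ (v : V) (g : G) (a : A), Ψ (act v (SemidirectProduct.inr g)) (φ g⁻¹ a) = Ψ v a)
    (hΨ3 : ∀ (v : V) (a b : A), Ψ v (a * b) = Ψ v a * Ψ v b)
    (x : X) :
    (∀ w w' : V, p w = x → p w' = x → ∀ g : G, xact x g = x →
      ∀ a a' : A, act w (SemidirectProduct.inl a) = act w (SemidirectProduct.inr g) →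
        act w' (SemidirectProduct.inl a') = act w' (SemidirectProduct.inr g) →
        Ψ w a = Ψ w' a') ∧
    (∀ w : V, p w = x → ∀ g h : G, xact x g = x → xact x h = x →
      ∀ a b c : A,
        act w (SemidirectProduct.inl a) = act w (SemidirectProduct.inr g) →
        act w (SemidirectProduct.inl b) = act w (SemidirectProduct.inr h) →
        act w (SemidirectProduct.inl c) = act w (SemidirectProduct.inr (g * h)) →
        Ψ w c = Ψ w a * Ψ w b) := by

  have hone : ∀ w : V, Ψ w 1 = 1 := by
    intro w
    have h := hΨ3 w 1 1
    rw [one_mul] at h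
    exact left_eq_mul.mp h
  have hinv : ∀ (w : V) (a : A), Ψ w a⁻¹ = (Ψ w a)⁻¹ := by
    intro w a
    have h := hΨ3 w a⁻¹ a
    rw [inv_mul_cancel, hone] at h
    exact eq_inv_of_mul_eq_one_left h.symm
  have hcancel : ∀ (v : V) (a b : A), act v (SemidirectProduct.inl a) =
      act v (SemidirectProduct.inl b) → a = b := by
    intro v a b hab
    have h : act v (SemidirectProduct.inl (a * b⁻¹)) = v := by
      rw [map_mul, ← hact_mul, hab, hact_mul, ← map_mul, mul_inv_cancel, map_one, hact_one]
    exact mul_inv_eq_one.mp (hfree v _ h)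
  have hcomm : ∀ (b : A) (g : G), (SemidirectProduct.inl b * SemidirectProduct.inr g : A ⋊[φ] G) =
      SemidirectProduct.inr g * SemidirectProduct.inl (φ g⁻¹ b) := by
    intro b g
    ext <;> simp
  have hφ : ∀ w : V, p w = x → ∀ g : G, xact x g = x → ∀ b : A,
      Ψ w (φ g⁻¹ b) = Ψ w b := by
    intro w hw g hg b
    have hp : p (act w (SemidirectProduct.inr g)) = p w := by rw [hpG, hw, hg]
    calc Ψ w (φ g⁻¹ b) = Ψ (act w (SemidirectProduct.inr g)) (φ g⁻¹ b) :=
          hΨ1 _ _ hp.symm _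
      _ = Ψ w b := hΨ2 w g b
  constructor
  · intro w w' hw hw' g hg a a' ha ha'
    obtain ⟨b, hb⟩ := htrans w w' (hw.trans hw'.symm)
    have h1 : act w (SemidirectProduct.inl (b * a')) = act w' (SemidirectProduct.inr g) := by
      rw [map_mul, ← hact_mul, hb, ha']
    have h2 : act w (SemidirectProduct.inl (a * φ g⁻¹ b)) =
        act w' (SemidirectProduct.inr g) := by
      rw [map_mul, ← hact_mul, ha, hact_mul, ← hcomm, ← hact_mul, hb]
    have heq : b * a' = a * φ g⁻¹ b := hcancel w _ _ (h1.trans h2.symm)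
    have ha'' : a' = b⁻¹ * a * φ g⁻¹ b := by
      rw [mul_assoc, ← heq, inv_mul_cancel_left]
    have hkey : Ψ w a' = Ψ w a := by
      rw [ha'', hΨ3, hΨ3, hinv, hφ w hw g hg b, mul_right_comm, inv_mul_cancel, one_mul]
    exact ((hΨ1 w' w (hw'.trans hw.symm) a').trans hkey).symm
  · intro w hw g h hg hh a b c ha hb hc
    have h1 : act w (SemidirectProduct.inl (b * φ h⁻¹ a)) =
        act w (SemidirectProduct.inl c) := by
      rw [map_mul, ← hact_mul, hb, hact_mul, ← hcomm, ← hact_mul, ha, hact_mul, ← map_mul, ← hc]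
    have heq : c = b * φ h⁻¹ a := (hcancel w _ _ h1).symm
    rw [heq, hΨ3, hφ w hw h hh a, mul_comm]
end
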